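/- Let Δ > 0 and m ∈ ℕ with m ≥ 1. For a ∈ ℝ and 0 ≤ i ≤ m define α_i(a) = e^{−a²/4} e^{i²Δ²/4} · [∏_{j=0, j≠i}^{m} (e^{aΔ/2} − e^{jΔ²/2})] / [∏_{j=0, j≠i}^{m} (e^{iΔ²/2} − e^{jΔ²/2})]. Then for every a ∈ ℝ the function g_a − Σ_{i=0}^{m} α_i(a) g_{iΔ} is orthogonal in L²(ℝ) to g_{jΔ} for every 0 ≤ j ≤ m; that is, Σ_{i=0}^{m} α_i(a) g_{iΔ} is the orthogonal projection of g_a onto the span of {g_{jΔ} : 0 ≤ j ≤ m}. -/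
import Mathlib

open MeasureTheory Real

/-- The unit-variance Gaussian density centered at `μ`. -/
noncomputable def gauss (μ x : ℝ) : ℝ := (Real.sqrt (2 * Real.pi))⁻¹ * Real.exp (-(x - μ)^2 / 2)

/-- The `L²` inner product of two functions. -/
noncomputable def ip (p q : ℝ → ℝ) : ℝ := ∫ x, p x * q x

lemma gauss_mul (μ ν x : ℝ) : gauss μ x * gauss ν x =
    (2 * Real.pi)⁻¹ * Real.exp (-(μ - ν)^2 / 4) * Real.exp (-(x - (μ+ν)/2)^2) := by
  unfold gauss
  rw [show (Real.sqrt (2*Real.pi))⁻¹ * Real.exp (-(x - μ)^2 / 2) * ((Real.sqrt (2*Real.pi))⁻¹ * Real.exp (-(x - ν)^2 / 2)) = (Real.sqrt (2*Real.pi) * Real.sqrt (2*Real.pi))⁻¹ * (Real.exp (-(x - μ)^2 / 2) * Real.exp (-(x - ν)^2 / 2)) by rw [mul_inv]; ring]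
  rw [Real.mul_self_sqrt (by positivity), ← Real.exp_add, mul_assoc, ← Real.exp_add]
  congr 1
  ring

lemma int_shift (c : ℝ) : ∫ x : ℝ, Real.exp (-(x - c)^2) = Real.sqrt Real.pi := by
  rw [show (fun x : ℝ => Real.exp (-(x - c)^2)) = fun x => (fun y => Real.exp (-1 * y^2)) (x - c) by funext x; ring_nf]
  rw [integral_sub_right_eq_self (fun y => Real.exp (-1 * y^2)) c, integral_gaussian]
  simp

lemma integrable_gauss_mul (μ ν : ℝ) : Integrable (fun x => gauss μ x * gauss ν x) := by
  simp_rw [gauss_mul]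
  apply Integrable.const_mul
  have : Integrable (fun y : ℝ => Real.exp (-1 * y^2)) := integrable_exp_neg_mul_sq one_pos
  have := this.comp_sub_right ((μ+ν)/2)
  simpa [neg_mul] using this

lemma int_gauss (μ ν : ℝ) : ∫ x, gauss μ x * gauss ν x =
    Real.exp (-(μ - ν)^2 / 4) / (2 * Real.sqrt Real.pi) := by
  simp_rw [gauss_mul, integral_const_mul, int_shift]
  have hπ : Real.sqrt Real.pi * Real.sqrt Real.pi = Real.pi := Real.mul_self_sqrt Real.pi_pos.le
  have h : Real.sqrt Real.pi ≠ 0 := by positivity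
  field_simp
  nlinarith [Real.exp_pos (-(μ - ν)^2 / 4)]

open Finset Polynomial in
lemma lagrange_key (m : ℕ) (v : ℕ → ℝ) (hv : Set.InjOn v (Finset.range (m+1)))
    (u : ℝ) (j : ℕ) (hj : j < m + 1) :
    u ^ j = ∑ i ∈ Finset.range (m+1), v i ^ j *
      (∏ k ∈ (Finset.range (m+1)).erase i, (u - v k)) /
      (∏ k ∈ (Finset.range (m+1)).erase i, (v i - v k)) := by
  have hdeg : ((X : ℝ[X]) ^ j).degree < (Finset.range (m+1)).card := by
    rw [Polynomial.degree_X_pow, Finset.card_range]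
    exact_mod_cast hj
  have h := Lagrange.eq_interpolate (v := v) hv hdeg
  have h2 := congrArg (Polynomial.eval u) h
  rw [Polynomial.eval_pow, Polynomial.eval_X] at h2
  rw [h2, Lagrange.interpolate_apply, Polynomial.eval_finset_sum]
  refine Finset.sum_congr rfl fun i hi => ?_
  rw [Polynomial.eval_mul, Polynomial.eval_C, Polynomial.eval_pow, Polynomial.eval_X,
    Lagrange.basis, Polynomial.eval_prod]
  rw [show (∏ k ∈ (Finset.range (m+1)).erase i, Polynomial.eval u (Lagrange.basisDivisor (v i) (v k)))
      = ∏ k ∈ (Finset.range (m+1)).erase i, ((v i - v k)⁻¹ * (u - v k)) by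
    refine Finset.prod_congr rfl fun k hk => ?_
    simp [Lagrange.basisDivisor]]
  rw [Finset.prod_mul_distrib, Finset.prod_inv_distrib]
  rw [div_eq_mul_inv]
  ring

theorem stmt2 (Δ : ℝ) (hΔ : 0 < Δ) (m : ℕ) (hm : 1 ≤ m) (a : ℝ) (α : ℕ → ℝ)
    (hα : ∀ i ∈ Finset.range (m+1), α i =
      Real.exp (-a^2 / 4) * Real.exp ((i:ℝ)^2 * Δ^2 / 4) *
        (∏ j ∈ (Finset.range (m+1)).erase i,
            (Real.exp (a * Δ / 2) - Real.exp ((j:ℝ) * Δ^2 / 2))) /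
        (∏ j ∈ (Finset.range (m+1)).erase i,
            (Real.exp ((i:ℝ) * Δ^2 / 2) - Real.exp ((j:ℝ) * Δ^2 / 2)))) :
    ∀ j ∈ Finset.range (m+1),
      ip (fun x => gauss a x - ∑ i ∈ Finset.range (m+1), α i * gauss ((i:ℝ) * Δ) x)
        (gauss ((j:ℝ) * Δ)) = 0 := by
  intro j hj
  set S := Finset.range (m+1) with hS
  set v : ℕ → ℝ := fun i => Real.exp ((i:ℝ) * Δ^2 / 2) with hv
  have hvinj : Set.InjOn v S := by
    intro i _ k _ h
    have h2 : (i:ℝ) * Δ^2 / 2 = (k:ℝ) * Δ^2 / 2 := Real.exp_injective h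
    have hΔ2 : Δ^2 ≠ 0 := by positivity
    field_simp at h2
    exact_mod_cast h2
  -- Step 1: expand the inner product
  unfold ip
  have hrw : (fun x => (gauss a x - ∑ i ∈ S, α i * gauss ((i:ℝ)*Δ) x) * gauss ((j:ℝ)*Δ) x)
      = fun x => gauss a x * gauss ((j:ℝ)*Δ) x
          - ∑ i ∈ S, α i * (gauss ((i:ℝ)*Δ) x * gauss ((j:ℝ)*Δ) x) := by
    funext x
    rw [sub_mul, Finset.sum_mul]
    congr 1
    exact Finset.sum_congr rfl fun i _ => by ring
  rw [hrw, integral_sub (integrable_gauss_mul a _)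
      (integrable_finset_sum S fun i _ => (integrable_gauss_mul _ _).const_mul (α i)),
    integral_finset_sum S fun i _ => (integrable_gauss_mul _ _).const_mul (α i)]
  simp_rw [integral_const_mul, int_gauss]
  rw [sub_eq_zero]
  -- Step 2: the Lagrange identity
  have key := lagrange_key m v hvinj (Real.exp (a * Δ / 2)) j (Finset.mem_range.mp hj)
  have hQ : ∀ i ∈ S, (∏ k ∈ S.erase i, (v i - v k)) ≠ 0 := by
    intro i hi
    rw [Finset.prod_ne_zero_iff]
    intro k hk
    rw [sub_ne_zero]
    exact fun h => (Finset.mem_erase.mp hk).1 (hvinj hi (Finset.mem_erase.mp hk).2 h).symm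
  have hsqrt : (2 : ℝ) * Real.sqrt Real.pi ≠ 0 := by positivity
  calc Real.exp (-(a - (j:ℝ)*Δ)^2/4) / (2 * Real.sqrt Real.pi)
      = Real.exp (-a^2/4 - (j:ℝ)^2*Δ^2/4) / (2 * Real.sqrt Real.pi) * Real.exp (a*Δ/2) ^ j := by
        rw [← Real.exp_nat_mul, div_mul_eq_mul_div, ← Real.exp_add]
        congr 2
        ring
    _ = Real.exp (-a^2/4 - (j:ℝ)^2*Δ^2/4) / (2 * Real.sqrt Real.pi) *
          ∑ i ∈ S, v i ^ j * (∏ k ∈ S.erase i, (Real.exp (a*Δ/2) - v k)) /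
            (∏ k ∈ S.erase i, (v i - v k)) := by rw [← key]
    _ = ∑ i ∈ S, α i * (Real.exp (-((i:ℝ)*Δ - (j:ℝ)*Δ)^2/4) / (2 * Real.sqrt Real.pi)) := by
        rw [Finset.mul_sum]
        refine Finset.sum_congr rfl fun i hi => ?_
        rw [hα i hi]
        have e1 : Real.exp (-a^2/4) * Real.exp ((i:ℝ)^2*Δ^2/4) *
            Real.exp (-((i:ℝ)*Δ - (j:ℝ)*Δ)^2/4)
            = Real.exp (-a^2/4 - (j:ℝ)^2*Δ^2/4) * Real.exp ((j:ℕ) * ((i:ℝ)*Δ^2/2)) := by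
          rw [← Real.exp_add, ← Real.exp_add, ← Real.exp_add, Real.exp_eq_exp]
          push_cast
          ring
        calc Real.exp (-a^2/4 - (j:ℝ)^2*Δ^2/4) / (2 * Real.sqrt Real.pi) *
              (v i ^ j * (∏ k ∈ S.erase i, (Real.exp (a*Δ/2) - v k)) /
                (∏ k ∈ S.erase i, (v i - v k)))
            = (Real.exp (-a^2/4 - (j:ℝ)^2*Δ^2/4) * Real.exp ((j:ℕ) * ((i:ℝ)*Δ^2/2))) *
                ((∏ k ∈ S.erase i, (Real.exp (a*Δ/2) - v k)) /
                  (∏ k ∈ S.erase i, (v i - v k))) / (2 * Real.sqrt Real.pi) := by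
              rw [hv]
              simp only
              rw [← Real.exp_nat_mul]
              ring
          _ = (Real.exp (-a^2/4) * Real.exp ((i:ℝ)^2*Δ^2/4) *
                Real.exp (-((i:ℝ)*Δ - (j:ℝ)*Δ)^2/4)) *
                ((∏ k ∈ S.erase i, (Real.exp (a*Δ/2) - v k)) /
                  (∏ k ∈ S.erase i, (v i - v k))) / (2 * Real.sqrt Real.pi) := by rw [e1]
          _ = Real.exp (-a^2/4) * Real.exp ((i:ℝ)^2*Δ^2/4) *
                (∏ k ∈ S.erase i, (Real.exp (a*Δ/2) - Real.exp ((k:ℝ)*Δ^2/2))) /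
                (∏ k ∈ S.erase i, (Real.exp ((i:ℝ)*Δ^2/2) - Real.exp ((k:ℝ)*Δ^2/2))) *
                (Real.exp (-((i:ℝ)*Δ - (j:ℝ)*Δ)^2/4) / (2 * Real.sqrt Real.pi)) := by
              rw [hv]; ring
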